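/- arXiv:1709.08988 — 5 statements merged into one kernel-verified Lean document; each statement's English description precedes it below -/
import Mathlib

section
/- Let V, W be independent uniformly distributed random bits, and define T = AND(¬V, ¬W) and U = AND(V, W). Then the Ingleton quantity I(T:U|V) + I(T:U|W) + I(V:W) - I(T:U) is strictly negative for this distribution. -/
open Finset

/-- Probability that the random variable `X` takes value `x`, for weights `μ`. -/
noncomputable def prob {Ω α : Type} [Fintype Ω] [Fintype α] [DecidableEq α]
    (μ : Ω → ℝ) (X : Ω → α) (x : α) : ℝ :=
  ∑ ω, if X ω = x then μ ω else 0

/-- Shannon entropy (base 2) of a finite discrete random variable,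
with the convention `0 * log₂ 0 = 0` (since `Real.logb 2 0 = 0`). -/
noncomputable def ent {Ω α : Type} [Fintype Ω] [Fintype α] [DecidableEq α]
    (μ : Ω → ℝ) (X : Ω → α) : ℝ :=
  -∑ x, prob μ X x * Real.logb 2 (prob μ X x)

/-- `μ` is a probability mass function on the finite sample space `Ω`. -/
def IsPMF {Ω : Type} [Fintype Ω] (μ : Ω → ℝ) : Prop :=
  (∀ ω, 0 ≤ μ ω) ∧ ∑ ω, μ ω = 1

/-- Mutual information `I(X:Y) = H(X) + H(Y) - H(X,Y)`. -/
noncomputable def mutualInfo {Ω α β : Type} [Fintype Ω] [Fintype α] [Fintype β]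
    [DecidableEq α] [DecidableEq β] (μ : Ω → ℝ) (X : Ω → α) (Y : Ω → β) : ℝ :=
  ent μ X + ent μ Y - ent μ (fun ω => (X ω, Y ω))

/-- Conditional mutual information
`I(X:Y|Z) = H(X,Z) + H(Y,Z) - H(Z) - H(X,Y,Z)`. -/
noncomputable def condMutualInfo {Ω α β γ : Type} [Fintype Ω] [Fintype α] [Fintype β]
    [Fintype γ] [DecidableEq α] [DecidableEq β] [DecidableEq γ]
    (μ : Ω → ℝ) (X : Ω → α) (Y : Ω → β) (Z : Ω → γ) : ℝ :=
  ent μ (fun ω => (X ω, Z ω)) + ent μ (fun ω => (Y ω, Z ω)) - ent μ Z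
    - ent μ (fun ω => (X ω, Y ω, Z ω))

/-- Conditional entropy `H(X|Y) = H(X,Y) - H(Y)`. -/
noncomputable def condEnt {Ω α β : Type} [Fintype Ω] [Fintype α] [Fintype β]
    [DecidableEq α] [DecidableEq β] (μ : Ω → ℝ) (X : Ω → α) (Y : Ω → β) : ℝ :=
  ent μ (fun ω => (X ω, Y ω)) - ent μ Y


/-- Uniform distribution on two independent bits. -/
noncomputable def unif2 : Bool × Bool → ℝ := fun _ => 1/4

def Vb : Bool × Bool → Bool := fun ω => ω.1
def Wb : Bool × Bool → Bool := fun ω => ω.2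
def Tb : Bool × Bool → Bool := fun ω => (!ω.1) && (!ω.2)
def Ub : Bool × Bool → Bool := fun ω => ω.1 && ω.2

/-- For V, W independent uniform bits, T = AND(¬V,¬W), U = AND(V,W),
the Ingleton quantity I(T:U|V) + I(T:U|W) + I(V:W) - I(T:U) is strictly negative. -/
theorem ingleton_quantity_neg :
    condMutualInfo unif2 Tb Ub Vb + condMutualInfo unif2 Tb Ub Wb
      + mutualInfo unif2 Vb Wb - mutualInfo unif2 Tb Ub < 0 := by
  have h2 : Real.logb 2 (1/2 : ℝ) = -1 := by
    rw [one_div, Real.logb_inv, Real.logb_self_eq_one] <;> norm_num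
  have h4 : Real.logb 2 (1/4 : ℝ) = -2 := by
    rw [show (1/4:ℝ) = (2^(2:ℕ))⁻¹ by norm_num, Real.logb_inv, Real.logb_pow,
      Real.logb_self_eq_one] <;> norm_num
  have h34 : Real.logb 2 (3/4 : ℝ) = Real.logb 2 3 - 2 := by
    rw [Real.logb_div (by norm_num) (by norm_num),
      show Real.logb 2 (4:ℝ) = 2 by
        rw [show (4:ℝ) = 2^(2:ℕ) by norm_num, Real.logb_pow, Real.logb_self_eq_one] <;> norm_num]
  have hL : Real.logb 2 3 < 5/3 := by
    rw [Real.logb, div_lt_iff₀ (Real.log_pos (by norm_num))]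
    have h27 : (3:ℝ) * Real.log 3 = Real.log 27 := by
      rw [show (27:ℝ) = 3^(3:ℕ) by norm_num, Real.log_pow]; push_cast; ring
    have h32 : (5:ℝ) * Real.log 2 = Real.log 32 := by
      rw [show (32:ℝ) = 2^(5:ℕ) by norm_num, Real.log_pow]; push_cast; ring
    nlinarith [Real.log_lt_log (by norm_num : (0:ℝ) < 27) (by norm_num : (27:ℝ) < 32)]
  simp only [condMutualInfo, mutualInfo, ent, prob, unif2, Tb, Ub, Vb, Wb,
    Fintype.sum_prod_type, Fintype.sum_bool]
  norm_num [h2, h4, h34]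
  nlinarith [hL]
end

section
/- For the distribution where V, W are independent uniform bits, T = AND(¬V,¬W) and U = AND(V,W), the Ingleton inequality I(T:U|V) + I(T:U|W) + I(V:W) ≥ I(T:U) fails. -/
open Finset

/-- For V, W independent uniform bits, T = AND(¬V,¬W), U = AND(V,W),
the Ingleton inequality I(T:U|V) + I(T:U|W) + I(V:W) ≥ I(T:U) fails. -/
theorem ingleton_inequality_fails :
    ¬ (mutualInfo unif2 Tb Ub ≤
        condMutualInfo unif2 Tb Ub Vb + condMutualInfo unif2 Tb Ub Wb
          + mutualInfo unif2 Vb Wb) := by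
  have h2 : Real.logb 2 (1/2 : ℝ) = -1 := by
    rw [one_div, Real.logb_inv, Real.logb_self_eq_one] <;> norm_num
  have h4' : Real.logb 2 (4 : ℝ) = 2 := by
    rw [show (4:ℝ) = 2^(2:ℕ) by norm_num, Real.logb_pow, Real.logb_self_eq_one] <;> norm_num
  have h4 : Real.logb 2 (1/4 : ℝ) = -2 := by
    rw [one_div, Real.logb_inv, h4']
  have h34 : Real.logb 2 (3/4 : ℝ) = Real.logb 2 3 - 2 := by
    rw [Real.logb_div (by norm_num) (by norm_num), h4']
  have hlt : Real.logb 2 (3:ℝ) < 5/3 := by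
    rw [Real.logb_lt_iff_lt_rpow (by norm_num) (by norm_num)]
    have h3 : (3:ℝ)^(3:ℕ) < ((2:ℝ) ^ ((5:ℝ)/3))^(3:ℕ) := by
      rw [← Real.rpow_natCast ((2:ℝ) ^ ((5:ℝ)/3)) 3, ← Real.rpow_mul (by norm_num)]
      norm_num
    exact lt_of_pow_lt_pow_left₀ 3 (Real.rpow_nonneg (by norm_num) _) h3
  simp only [mutualInfo, condMutualInfo, ent, prob, unif2, Tb, Ub, Vb, Wb,
    Fintype.sum_prod_type, Fintype.sum_bool]
  norm_num
  rw [h2, h4, h34]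
  linarith
end

section
/- Let A, X, Y, Z be jointly distributed finite discrete random variables whose entropies satisfy the Shannon inequalities together with the two conditional independence constraints I(A:X) = 0 and I(X:Y|A,Z) = 0. Then I(X:Y,Z) ≤ H(Z). -/
open Finset

/-!
Every Shannon inequality used is an instance of `I(X:Y|Z) ≥ 0`, which is Gibbs' inequality
`E[log r] ≤ E[r] - 1 ≤ 0` for the likelihood ratio `r` of the law making `X` and `Y` independent
given `Z` against the true joint law. The constraint then follows from
`I(X:Y,Z) ≤ I(X:A,Y,Z) = I(X:A) + I(X:Z|A) + I(X:Y|A,Z) = I(X:Z|A) ≤ H(Z|A) ≤ H(Z)`.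
-/

theorem sum_mul_logb_nonpos {ι : Type} [Fintype ι] {p r : ι → ℝ} (hp : ∀ i, 0 ≤ p i)
    (hr : ∀ i, p i ≠ 0 → 0 < r i) (hsum : ∑ i, p i * r i ≤ ∑ i, p i) :
    ∑ i, p i * Real.logb 2 (r i) ≤ 0 := by
  have hlog2 : 0 < Real.log 2 := Real.log_pos one_lt_two
  have hterm : ∀ i, p i * Real.logb 2 (r i) ≤ (p i * r i - p i) / Real.log 2 := by
    intro i
    rcases (hp i).eq_or_lt with h | h
    · simp [← h]
    · rw [Real.logb, le_div_iff₀ hlog2, ← mul_div_assoc, div_mul_cancel₀ _ hlog2.ne']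
      nlinarith [Real.log_le_sub_one_of_pos (hr i h.ne')]
  calc ∑ i, p i * Real.logb 2 (r i) ≤ ∑ i, (p i * r i - p i) / Real.log 2 :=
        Finset.sum_le_sum fun i _ => hterm i
    _ = (∑ i, p i * r i - ∑ i, p i) / Real.log 2 := by
        rw [← Finset.sum_div, Finset.sum_sub_distrib]
    _ ≤ 0 := div_nonpos_of_nonpos_of_nonneg (by linarith) hlog2.le

section

variable {Ω α β γ : Type} [Fintype Ω] [Fintype α] [Fintype β] [Fintype γ]
  [DecidableEq α] [DecidableEq β] [DecidableEq γ]

theorem sum_prob_mul (μ : Ω → ℝ) (W : Ω → α) (g : α → ℝ) :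
    ∑ t, prob μ W t * g t = ∑ ω, μ ω * g (W ω) := by
  simp only [prob, Finset.sum_mul, ite_mul, zero_mul]
  rw [Finset.sum_comm]
  simp

theorem sum_prob (μ : Ω → ℝ) (W : Ω → α) : ∑ t, prob μ W t = ∑ ω, μ ω := by
  simpa using sum_prob_mul μ W 1

theorem ent_eq_neg_sum (μ : Ω → ℝ) (W : Ω → α) :
    ent μ W = -∑ ω, μ ω * Real.logb 2 (prob μ W (W ω)) := by
  rw [ent, sum_prob_mul μ W fun t => Real.logb 2 (prob μ W t)]

theorem prob_nonneg {μ : Ω → ℝ} (hμ : ∀ ω, 0 ≤ μ ω) (W : Ω → α) (t : α) : 0 ≤ prob μ W t :=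
  Finset.sum_nonneg fun ω _ => by split <;> simp [hμ ω]

theorem prob_apply_pos {μ : Ω → ℝ} (hμ : ∀ ω, 0 ≤ μ ω) (W : Ω → α) {ω : Ω} (hω : μ ω ≠ 0) :
    0 < prob μ W (W ω) := by
  have h := Finset.single_le_sum (f := fun ω' => if W ω' = W ω then μ ω' else 0)
    (fun ω' _ => by split <;> simp [hμ ω']) (Finset.mem_univ ω)
  rw [if_pos rfl] at h
  exact (hμ ω).lt_of_ne' hω |>.trans_le h

theorem ent_congr (μ : Ω → ℝ) {W : Ω → α} {W' : Ω → β}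
    (h : ∀ ω ω', W ω' = W ω ↔ W' ω' = W' ω) : ent μ W = ent μ W' := by
  simp only [ent_eq_neg_sum, prob, h]

theorem sum_prob_pair_left (μ : Ω → ℝ) (U : Ω → α) (V : Ω → β) (v : β) :
    ∑ u, prob μ (fun ω => (U ω, V ω)) (u, v) = prob μ V v := by
  simp only [prob, Prod.mk.injEq]
  rw [Finset.sum_comm]
  simp [ite_and]

theorem sum_sum_prob_mul_prob_div_prob (μ : Ω → ℝ) (X : Ω → α) (Y : Ω → β) (Z : Ω → γ)
    (z : γ) :
    ∑ y, ∑ x, prob μ (fun ω => (X ω, Z ω)) (x, z) * prob μ (fun ω => (Y ω, Z ω)) (y, z)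
      / prob μ Z z = prob μ Z z := by
  simp only [← Finset.sum_div, ← Finset.sum_mul, ← Finset.mul_sum, sum_prob_pair_left]
  exact mul_self_div_self _

noncomputable def condIndepRatio (μ : Ω → ℝ) (X : Ω → α) (Y : Ω → β) (Z : Ω → γ) (ω : Ω) : ℝ :=
  prob μ (fun ω => (X ω, Z ω)) (X ω, Z ω) * prob μ (fun ω => (Y ω, Z ω)) (Y ω, Z ω)
    / (prob μ Z (Z ω) * prob μ (fun ω => (X ω, Y ω, Z ω)) (X ω, Y ω, Z ω))

theorem condIndepRatio_pos {μ : Ω → ℝ} (hμ : ∀ ω, 0 ≤ μ ω) (X : Ω → α) (Y : Ω → β)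
    (Z : Ω → γ) {ω : Ω} (hω : μ ω ≠ 0) : 0 < condIndepRatio μ X Y Z ω := by
  have := prob_apply_pos hμ (fun ω => (X ω, Z ω)) hω
  have := prob_apply_pos hμ (fun ω => (Y ω, Z ω)) hω
  have := prob_apply_pos hμ Z hω
  have := prob_apply_pos hμ (fun ω => (X ω, Y ω, Z ω)) hω
  unfold condIndepRatio
  positivity

theorem condMutualInfo_eq_neg_sum {μ : Ω → ℝ} (hμ : ∀ ω, 0 ≤ μ ω)
    (X : Ω → α) (Y : Ω → β) (Z : Ω → γ) :
    condMutualInfo μ X Y Z = -∑ ω, μ ω * Real.logb 2 (condIndepRatio μ X Y Z ω) := by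
  have hterm : ∀ ω, μ ω * Real.logb 2 (condIndepRatio μ X Y Z ω)
      = μ ω * Real.logb 2 (prob μ (fun ω => (X ω, Z ω)) (X ω, Z ω))
        + μ ω * Real.logb 2 (prob μ (fun ω => (Y ω, Z ω)) (Y ω, Z ω))
        - μ ω * Real.logb 2 (prob μ Z (Z ω))
        - μ ω * Real.logb 2 (prob μ (fun ω => (X ω, Y ω, Z ω)) (X ω, Y ω, Z ω)) := by
    intro ω
    rcases eq_or_ne (μ ω) 0 with hω | hω
    · simp [hω]
    have hXZ := prob_apply_pos hμ (fun ω => (X ω, Z ω)) hω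
    have hYZ := prob_apply_pos hμ (fun ω => (Y ω, Z ω)) hω
    have hZ := prob_apply_pos hμ Z hω
    have hXYZ := prob_apply_pos hμ (fun ω => (X ω, Y ω, Z ω)) hω
    rw [condIndepRatio, Real.logb_div (by positivity) (by positivity),
      Real.logb_mul hXZ.ne' hYZ.ne', Real.logb_mul hZ.ne' hXYZ.ne']
    ring
  simp only [condMutualInfo, ent_eq_neg_sum, hterm, Finset.sum_add_distrib,
    Finset.sum_sub_distrib]
  ring

theorem sum_mul_condIndepRatio_le {μ : Ω → ℝ} (hμ : ∀ ω, 0 ≤ μ ω)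
    (X : Ω → α) (Y : Ω → β) (Z : Ω → γ) :
    ∑ ω, μ ω * condIndepRatio μ X Y Z ω ≤ ∑ ω, μ ω := by
  set pXZ := prob μ (fun ω => (X ω, Z ω))
  set pYZ := prob μ (fun ω => (Y ω, Z ω))
  set pZ := prob μ Z
  set pXYZ := prob μ (fun ω => (X ω, Y ω, Z ω))
  calc ∑ ω, μ ω * condIndepRatio μ X Y Z ω
      = ∑ t, pXYZ t * (pXZ (t.1, t.2.2) * pYZ (t.2.1, t.2.2) / (pZ t.2.2 * pXYZ t)) :=
        (sum_prob_mul μ (fun ω => (X ω, Y ω, Z ω))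
          fun t => pXZ (t.1, t.2.2) * pYZ (t.2.1, t.2.2) / (pZ t.2.2 * pXYZ t)).symm
    _ ≤ ∑ t : α × β × γ, pXZ (t.1, t.2.2) * pYZ (t.2.1, t.2.2) / pZ t.2.2 := by
      refine Finset.sum_le_sum fun t _ => ?_
      rcases eq_or_ne (pXYZ t) 0 with h | h
      · rw [h, zero_mul]
        exact div_nonneg (mul_nonneg (prob_nonneg hμ _ _) (prob_nonneg hμ _ _))
          (prob_nonneg hμ _ _)
      · rw [mul_comm (pZ _), ← div_div, ← mul_div_assoc, mul_div_cancel₀ _ h]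
    _ = ∑ z, pZ z := by
      simp only [Fintype.sum_prod_type_right, pXZ, pYZ, pZ, sum_sum_prob_mul_prob_div_prob]
    _ = ∑ ω, μ ω := sum_prob μ Z

theorem condMutualInfo_nonneg {μ : Ω → ℝ} (hμ : ∀ ω, 0 ≤ μ ω)
    (X : Ω → α) (Y : Ω → β) (Z : Ω → γ) : 0 ≤ condMutualInfo μ X Y Z := by
  rw [condMutualInfo_eq_neg_sum hμ, neg_nonneg]
  exact sum_mul_logb_nonpos hμ (fun _ => condIndepRatio_pos hμ X Y Z)
    (sum_mul_condIndepRatio_le hμ X Y Z)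

theorem ent_const_unit {μ : Ω → ℝ} (hμ : ∑ ω, μ ω = 1) :
    ent μ (fun _ : Ω => ()) = 0 := by
  simp [ent_eq_neg_sum, prob, hμ]

theorem mutualInfo_nonneg {μ : Ω → ℝ} (hμ : IsPMF μ) (U : Ω → α) (V : Ω → β) :
    0 ≤ mutualInfo μ U V := by
  have h := condMutualInfo_nonneg hμ.1 U V fun _ => ()
  have hU : ent μ (fun ω => (U ω, ())) = ent μ U := ent_congr μ (by simp)
  have hV : ent μ (fun ω => (V ω, ())) = ent μ V := ent_congr μ (by simp)
  have hUV : ent μ (fun ω => (U ω, V ω, ())) = ent μ (fun ω => (U ω, V ω)) :=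
    ent_congr μ (by simp)
  rw [condMutualInfo, ent_const_unit hμ.2, hU, hV, hUV] at h
  rw [mutualInfo]
  linarith

theorem ent_le_ent_pair {μ : Ω → ℝ} (hμ : ∀ ω, 0 ≤ μ ω) (V : Ω → α) (W : Ω → β) :
    ent μ W ≤ ent μ (fun ω => (V ω, W ω)) := by
  have h := condMutualInfo_nonneg hμ V V W
  have hVVW : ent μ (fun ω => (V ω, V ω, W ω)) = ent μ (fun ω => (V ω, W ω)) :=
    ent_congr μ (by simp)
  rw [condMutualInfo, hVVW] at h
  linarith

end

/-- Entropic constraint of the instrumental scenario: if I(A:X) = 0 and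
I(X:Y|A,Z) = 0 then I(X:Y,Z) ≤ H(Z).  (The Shannon inequalities hold
automatically since A, X, Y, Z are actual jointly distributed random
variables.) -/
theorem instrumental_entropic_constraint
    {Ω a x y z : Type} [Fintype Ω] [Fintype a] [Fintype x] [Fintype y] [Fintype z]
    [DecidableEq a] [DecidableEq x] [DecidableEq y] [DecidableEq z]
    (μ : Ω → ℝ) (hμ : IsPMF μ)
    (A : Ω → a) (X : Ω → x) (Y : Ω → y) (Z : Ω → z)
    (h1 : mutualInfo μ A X = 0)
    (h2 : condMutualInfo μ X Y (fun ω => (A ω, Z ω)) = 0) :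
    mutualInfo μ X (fun ω => (Y ω, Z ω)) ≤ ent μ Z := by
  have hAX_YZ := condMutualInfo_nonneg hμ.1 A X fun ω => (Y ω, Z ω)
  have hAZ := mutualInfo_nonneg hμ A Z
  have hAX := ent_le_ent_pair hμ.1 Z fun ω => (A ω, X ω)
  have e1 : ent μ (fun ω => (X ω, A ω, Z ω)) = ent μ (fun ω => (Z ω, A ω, X ω)) :=
    ent_congr μ fun _ _ => by simp only [Prod.mk.injEq]; tauto
  have e2 : ent μ (fun ω => (Y ω, A ω, Z ω)) = ent μ (fun ω => (A ω, Y ω, Z ω)) :=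
    ent_congr μ fun _ _ => by simp only [Prod.mk.injEq]; tauto
  have e3 : ent μ (fun ω => (X ω, Y ω, A ω, Z ω)) = ent μ (fun ω => (A ω, X ω, Y ω, Z ω)) :=
    ent_congr μ fun _ _ => by simp only [Prod.mk.injEq]; tauto
  rw [mutualInfo] at h1 hAZ ⊢
  rw [condMutualInfo] at h2 hAX_YZ
  linarith
end

section
/- Let C be a classical causal structure with a parentless observed node X taking values 1,…,n, and let P be a joint distribution over X, its descendants X↑, and its non-descendants X↑̸, such that X is independent of X↑̸ (i.e., P(X↑, X↑̸, X=x) = P(X↑ | X↑̸, X=x)·P(X↑̸)·P(X=x) with P(X=x) > 0 for all x). Then there exists a joint distribution Q over the n·|X↑| + |X↑̸| variables consisting of n post-selected copies X↑|_{X=1},…,X↑|_{X=n} together with X↑̸, such that for every x, the marginal of Q on (X↑|_{X=x}, X↑̸) equals P(X↑, X↑̸ | X=x). -/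
open Finset

/-! The glued distribution draws `t` from the marginal of `X↑̸` and then, independently for each
`x`, the copy `X↑|_{X=x}` from `P(X↑ | X↑̸ = t, X = x)`. Summing out all copies but the `x`-th
leaves `P(X↑̸ = t) · P(X↑ = s | X↑̸ = t, X = x)`, which independence of `X` and `X↑̸` turns into
`P(X↑ = s, X↑̸ = t | X = x)`. -/

theorem Finset.sum_filter_apply_eq_mul_prod_sum {ι S R : Type*} [Fintype ι] [DecidableEq ι]
    [Fintype S] [DecidableEq S] [CommSemiring R] (g : ι → S → R) (i : ι) (s : S) :
    ∑ f ∈ univ.filter (fun f : ι → S => f i = s), ∏ j, g j (f j)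
      = g i s * ∏ j ∈ univ.erase i, ∑ u, g j u := by
  rw [← Fintype.piFinset_univ (β := fun _ : ι => S),
    ← Fintype.piFinset_update_singleton_eq_filter_piFinset_eq (fun _ => univ) i (mem_univ s),
    ← prod_univ_sum, ← mul_prod_erase univ _ (mem_univ i)]
  congr 1
  · simp
  · exact prod_congr rfl fun j hj => by rw [Function.update_of_ne (ne_of_mem_erase hj)]

theorem Finset.sum_filter_apply_eq_of_sum_eq_one {ι S R : Type*} [Fintype ι] [DecidableEq ι]
    [Fintype S] [DecidableEq S] [CommSemiring R] (g : ι → S → R) (hg : ∀ j, ∑ u, g j u = 1)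
    (i : ι) (s : S) :
    ∑ f ∈ univ.filter (fun f : ι → S => f i = s), ∏ j, g j (f j) = g i s := by
  rw [sum_filter_apply_eq_mul_prod_sum, prod_eq_one fun j _ => hg j, mul_one]

namespace FineGluing

variable {ι S T : Type*} [Fintype ι] [Fintype S]

/-- `P(X↑̸ = t)`. -/
noncomputable def marginal (p : ι → S → T → ℝ) (t : T) : ℝ :=
  ∑ x, ∑ s, p x s t

/-- `P(X↑ = s | X↑̸ = t, X = x)`, with value `0` when `P(X↑̸ = t) = 0`. -/
noncomputable def condProb (p : ι → S → T → ℝ) (pX : ι → ℝ) (x : ι) (s : S) (t : T) : ℝ :=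
  p x s t / (pX x * marginal p t)

noncomputable def glue [DecidableEq ι] (p : ι → S → T → ℝ) (pX : ι → ℝ) (f : ι → S) (t : T) :
    ℝ :=
  marginal p t * ∏ x, condProb p pX x (f x) t

variable {p : ι → S → T → ℝ} {pX : ι → ℝ}

theorem le_marginal (hp0 : ∀ x s t, 0 ≤ p x s t) (x : ι) (s : S) (t : T) :
    p x s t ≤ marginal p t :=
  calc p x s t ≤ ∑ s, p x s t := single_le_sum (fun s _ => hp0 x s t) (mem_univ s)
    _ ≤ marginal p t :=
      single_le_sum (fun x _ => sum_nonneg fun s _ => hp0 x s t) (mem_univ x)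

theorem marginal_nonneg (hp0 : ∀ x s t, 0 ≤ p x s t) (t : T) : 0 ≤ marginal p t :=
  sum_nonneg fun x _ => sum_nonneg fun s _ => hp0 x s t

theorem sum_marginal [Fintype T] : ∑ t, marginal p t = ∑ x, ∑ s, ∑ t, p x s t := by
  simp only [marginal]
  rw [sum_comm]
  exact sum_congr rfl fun x _ => sum_comm

theorem sum_condProb (hindep : ∀ x t, ∑ s, p x s t = pX x * marginal p t) {x : ι} (hx : pX x ≠ 0)
    {t : T} (ht : marginal p t ≠ 0) : ∑ s, condProb p pX x s t = 1 := by
  simp only [condProb]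
  rw [← sum_div, hindep, div_self (mul_ne_zero hx ht)]

theorem glue_nonneg [DecidableEq ι] (hp0 : ∀ x s t, 0 ≤ p x s t) (hpX : ∀ x, 0 ≤ pX x)
    (f : ι → S) (t : T) : 0 ≤ glue p pX f t :=
  mul_nonneg (marginal_nonneg hp0 t) <| prod_nonneg fun x _ =>
    div_nonneg (hp0 x (f x) t) (mul_nonneg (hpX x) (marginal_nonneg hp0 t))

theorem sum_glue [DecidableEq ι] (hindep : ∀ x t, ∑ s, p x s t = pX x * marginal p t)
    (hpX : ∀ x, pX x ≠ 0) (t : T) : ∑ f, glue p pX f t = marginal p t := by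
  by_cases ht : marginal p t = 0
  · simp [glue, ht]
  · simp only [glue]
    rw [← mul_sum, ← Fintype.prod_sum fun x s => condProb p pX x s t,
      prod_eq_one fun x _ => sum_condProb hindep (hpX x) ht, mul_one]

theorem sum_sum_glue [DecidableEq ι] [Fintype T]
    (hindep : ∀ x t, ∑ s, p x s t = pX x * marginal p t) (hpX : ∀ x, pX x ≠ 0) :
    ∑ f, ∑ t, glue p pX f t = ∑ x, ∑ s, ∑ t, p x s t := by
  rw [sum_comm]
  simp only [sum_glue hindep hpX]
  exact sum_marginal

theorem sum_filter_glue [DecidableEq ι] [DecidableEq S] (hp0 : ∀ x s t, 0 ≤ p x s t)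
    (hindep : ∀ x t, ∑ s, p x s t = pX x * marginal p t) (hpX : ∀ x, pX x ≠ 0)
    (x : ι) (s : S) (t : T) :
    ∑ f ∈ univ.filter (fun f : ι → S => f x = s), glue p pX f t = p x s t / pX x := by
  by_cases ht : marginal p t = 0
  · have hpt : p x s t = 0 := le_antisymm (ht ▸ le_marginal hp0 x s t) (hp0 x s t)
    simp [glue, ht, hpt]
  · simp only [glue]
    rw [← mul_sum, sum_filter_apply_eq_of_sum_eq_one _ (fun y => sum_condProb hindep (hpX y) ht),
      condProb]
    field_simp

end FineGluing

theorem fine_gluing_general {n : ℕ} {S T : Type} [Fintype S] [Fintype T] [DecidableEq S]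
    (p : Fin n → S → T → ℝ)
    (hp0 : ∀ x s t, 0 ≤ p x s t)
    (hp1 : ∑ x, ∑ s, ∑ t, p x s t = 1)
    (pX : Fin n → ℝ)
    (hpXpos : ∀ x, 0 < pX x)
    (hindep : ∀ x t, ∑ s, p x s t = pX x * (∑ x', ∑ s, p x' s t)) :
    ∃ Q : (Fin n → S) → T → ℝ,
      (∀ f t, 0 ≤ Q f t) ∧ (∑ f, ∑ t, Q f t = 1) ∧
      ∀ (x : Fin n) (s : S) (t : T),
        (∑ f ∈ Finset.univ.filter (fun f : Fin n → S => f x = s), Q f t) * pX x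
          = p x s t := by
  have hpX : ∀ x, pX x ≠ 0 := fun x => (hpXpos x).ne'
  refine ⟨FineGluing.glue p pX, FineGluing.glue_nonneg hp0 fun x => (hpXpos x).le, ?_,
    fun x s t => ?_⟩
  · rw [FineGluing.sum_sum_glue hindep hpX, hp1]
  · rw [FineGluing.sum_filter_glue hp0 hindep hpX, div_mul_cancel₀ _ (hpX x)]

/-- Generalisation of (part of) Fine's theorem: given a joint distribution
p over (X, X↑, X↑̸) — with X parentless, taking values in Fin n with positive
probabilities, and independent of its non-descendants X↑̸ — there is a joint
distribution Q of the n post-selected copies X↑|_{X=x} together with X↑̸ whose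
marginal on (X↑|_{X=x}, X↑̸) is P(X↑, X↑̸ | X = x) for every x. -/
theorem fine_gluing {n : ℕ} {S T : Type} [Fintype S] [Fintype T] [DecidableEq S]
    (p : Fin n → S → T → ℝ)
    (hp0 : ∀ x s t, 0 ≤ p x s t)
    (hp1 : ∑ x, ∑ s, ∑ t, p x s t = 1)
    (pX : Fin n → ℝ) (hpX : ∀ x, pX x = ∑ s, ∑ t, p x s t)
    (hpXpos : ∀ x, 0 < pX x)
    (hindep : ∀ x t, ∑ s, p x s t = pX x * (∑ x', ∑ s, p x' s t)) :
    ∃ Q : (Fin n → S) → T → ℝ,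
      (∀ f t, 0 ≤ Q f t) ∧ (∑ f, ∑ t, Q f t = 1) ∧
      ∀ (x : Fin n) (s : S) (t : T),
        (∑ f ∈ Finset.univ.filter (fun f : Fin n → S => f x = s), Q f t) * pX x
          = p x s t :=
  fine_gluing_general p hp0 hp1 pX hpXpos hindep
end

section
/- The minimal set of Shannon inequalities has size n + n(n-1)·2^{n-3} for n ≥ 3: every monotonicity inequality H(X_{S∖T}) ≤ H(X_S) and submodularity inequality H(X_{S∩T}) + H(X_{S∪T}) ≤ H(X_S) + H(X_T) is a nonnegative linear combination of the n 'elemental' monotonicities H(X_{Ω∖{i}}) ≤ H(X_Ω) and the elemental submodularities I(X_i : X_j | X_U) ≥ 0 with i < j and U ⊆ Ω∖{i,j}. -/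
open Finset

/-!
Elemental submodularity says that the marginal gain `v (insert i U) - v U` does not grow when one
element is added to `U`; adding elements one at a time, it is antitone in `U`. Summing the marginal
gains of the elements of `S \ T` then gives `v (S ∪ T) - v T ≤ v S - v (S ∩ T)`, and every marginal
gain of `i` dominates the last one, `v Ω - v (Ω \ {i}) ≥ 0`, which gives monotonicity. The count is
`n (n - 1) / 2` pairs `i < j` times `2 ^ (n - 2)` sets `U`.
-/

lemma card_filter_fst_lt_snd_mul_two (n : ℕ) :
    #{p : Fin n × Fin n | p.1 < p.2} * 2 = n * (n - 1) := by
  rw [card_filter, Fintype.sum_prod_type_right]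
  have hcount (j : Fin n) : (∑ i : Fin n, if i < j then 1 else 0) = (j : ℕ) := by
    rw [← card_filter, filter_gt_eq_Iio, Fin.card_Iio]
  simp_rw [hcount]
  rw [Fin.sum_univ_eq_sum_range (fun k => k)]
  exact sum_range_id_mul_two n

section Elemental

variable {α : Type*} [DecidableEq α]

/-- The elemental submodularity inequalities `I(Xᵢ : Xⱼ | X_U) ≥ 0`, written as diminishing
marginal gains. -/
def ElementalSubmodular (v : Finset α → ℝ) : Prop :=
  ∀ ⦃i j : α⦄ ⦃U : Finset α⦄, i ≠ j → i ∉ U → j ∉ U →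
    v (insert i (insert j U)) - v (insert j U) ≤ v (insert i U) - v U

namespace ElementalSubmodular

variable {v : Finset α → ℝ} (hv : ElementalSubmodular v)
include hv

lemma marginal_union_le {i : α} (U D : Finset α) (hi : i ∉ U ∪ D) :
    v (insert i (U ∪ D)) - v (U ∪ D) ≤ v (insert i U) - v U := by
  induction D using Finset.induction_on with
  | empty => simp
  | insert j D _ ih =>
    rw [union_insert] at hi ⊢
    have hiD : i ∉ U ∪ D := fun h => hi (mem_insert_of_mem h)
    by_cases hj : j ∈ U ∪ D
    · rw [insert_eq_of_mem hj]
      exact ih hiD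
    · have hij : i ≠ j := by
        rintro rfl
        exact hi (mem_insert_self i _)
      exact (hv hij hiD hj).trans (ih hiD)

lemma marginal_antitone {i : α} {U W : Finset α} (hUW : U ⊆ W) (hi : i ∉ W) :
    v (insert i W) - v W ≤ v (insert i U) - v U := by
  rw [← union_sdiff_of_subset hUW] at hi ⊢
  exact hv.marginal_union_le U (W \ U) hi

lemma union_sub_le_union_sub {A B D : Finset α} (hAB : A ⊆ B) (hBD : Disjoint B D) :
    v (B ∪ D) - v B ≤ v (A ∪ D) - v A := by
  induction D using Finset.induction_on with
  | empty => simp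
  | insert j D hjD ih =>
    rw [disjoint_insert_right] at hBD
    have hj : j ∉ B ∪ D := by simp [hBD.1, hjD]
    have hmarginal := hv.marginal_antitone (union_subset_union hAB subset_rfl) hj
    rw [union_insert, union_insert]
    linarith [ih hBD.2]

lemma submodular (S T : Finset α) : v (S ∩ T) + v (S ∪ T) ≤ v S + v T := by
  have h :=
    hv.union_sub_le_union_sub (inter_subset_right (s₁ := S)) (disjoint_sdiff (s := T) (t := S))
  rw [union_sdiff_self_eq_union, union_comm (S ∩ T), sdiff_union_inter, union_comm T S] at h
  linarith

lemma le_insert [Fintype α] (htop : ∀ i, v (univ.erase i) ≤ v univ) (i : α) (U : Finset α) :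
    v U ≤ v (insert i U) := by
  by_cases hi : i ∈ U
  · rw [insert_eq_of_mem hi]
  · have := hv.marginal_antitone (subset_erase.mpr ⟨subset_univ U, hi⟩) (notMem_erase i univ)
    rw [insert_erase (mem_univ i)] at this
    linarith [htop i]

lemma monotone [Fintype α] (htop : ∀ i, v (univ.erase i) ≤ v univ) : Monotone v := by
  intro S T hST
  rw [← union_sdiff_of_subset hST]
  induction T \ S using Finset.induction_on with
  | empty => simp
  | insert j D _ ih => exact ih.trans (union_insert j S D ▸ hv.le_insert htop j _)

end ElementalSubmodular

end Elemental

lemma elementalSubmodular_of_lt {α : Type*} [LinearOrder α] {v : Finset α → ℝ}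
    (h : ∀ i j : α, i < j → ∀ U : Finset α, i ∉ U → j ∉ U →
      0 ≤ v (insert i U) + v (insert j U) - v U - v (insert i (insert j U))) :
    ElementalSubmodular v := by
  intro i j U hij hi hj
  rcases hij.lt_or_gt with hlt | hgt
  · linarith [h i j hlt U hi hj]
  · rw [insert_comm i j U]
    linarith [h j i hgt U hj hi]

/-- The elemental Shannon inequalities: (i) there are
n + n(n-1)·2^(n-3) of them for n ≥ 3, and (ii) every monotonicity inequality
v(S\T) ≤ v(S) and submodularity inequality v(S∩T) + v(S∪T) ≤ v(S) + v(T)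
follows from the n elemental monotonicities v(Ω\{i}) ≤ v(Ω) together with the
elemental submodularities I(Xᵢ:Xⱼ|X_U) ≥ 0 (i < j, U ⊆ Ω\{i,j}). -/
theorem elemental_shannon_inequalities {n : ℕ} (hn : 3 ≤ n) :
    (n + ((Finset.univ.filter (fun p : Fin n × Fin n => p.1 < p.2)).card) * 2 ^ (n - 2)
        = n + n * (n - 1) * 2 ^ (n - 3)) ∧
    (∀ v : Finset (Fin n) → ℝ, v ∅ = 0 →
      (∀ i : Fin n, v (Finset.univ.erase i) ≤ v Finset.univ) →
      (∀ i j : Fin n, i < j → ∀ U : Finset (Fin n), i ∉ U → j ∉ U →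
        0 ≤ v (insert i U) + v (insert j U) - v U - v (insert i (insert j U))) →
      (∀ S T : Finset (Fin n), v (S \ T) ≤ v S) ∧
      (∀ S T : Finset (Fin n), v (S ∩ T) + v (S ∪ T) ≤ v S + v T)) := by
  refine ⟨?_, fun v _ htop hsub => ?_⟩
  · have hpow : 2 ^ (n - 2) = 2 * 2 ^ (n - 3) := by
      rw [← pow_succ']
      congr 1
      omega
    rw [hpow, ← mul_assoc, card_filter_fst_lt_snd_mul_two]
  · have hv := elementalSubmodular_of_lt hsub
    exact ⟨fun S T => hv.monotone htop sdiff_subset, hv.submodular⟩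
end
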